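/- Let M be an m × N real matrix and let S be a set of r column indices (r ≤ m) such that the submatrix M̂ = M_{:,S} has full column rank r, i.e. M̂ᵀ M̂ is invertible. Set M̂⁺ = (M̂ᵀ M̂)^{-1} M̂ᵀ, and define for each column index i the quantity γ_i = ‖M_{:,i} − M̂ M̂⁺ M_{:,i}‖₂² (the squared norm of the component of column i orthogonal to the column span of M̂) and for each j ∈ S the quantity ω_j = ((M̂ᵀ M̂)^{-1})_{j,j}. Then for every j ∈ S and every i ∉ S, the submatrix M̂' = M_{:,(S\{j})∪{i}} obtained by replacing column j of M̂ with column i of M satisfies det((M̂')ᵀ M̂') = m_{j,i} · det(M̂ᵀ M̂), where m_{j,i} = ((M̂⁺ M)_{j,i})² + γ_i ω_j. -/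
import Mathlib

open Matrix BigOperators

section Aux
variable {n : Type*} [DecidableEq n] [Fintype n]

/-- Rank-one diagonal update of the determinant of a symmetric matrix. -/
lemma det_add_single_diag (A : Matrix n n ℝ) (hA : Aᵀ = A) (j : n) (γ : ℝ) :
    (A + Matrix.of (fun a b => if a = j ∧ b = j then γ else 0)).det
      = A.det + γ * A.adjugate j j := by
  have h1 : A + Matrix.of (fun a b => if a = j ∧ b = j then γ else 0)
      = A.updateCol j ((fun a => A a j) + γ • (Pi.single j 1 : n → ℝ)) := by
    ext a b
    by_cases hb : b = j
    · by_cases ha : a = j <;>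
        simp [Matrix.updateCol_apply, Pi.single_apply, ha, hb]
    · simp [Matrix.updateCol_apply, hb]
  have h2 : (A.updateCol j (Pi.single j (1 : ℝ))).det = A.adjugate j j := by
    calc (A.updateCol j (Pi.single j (1 : ℝ))).det
        = ((A.updateCol j (Pi.single j (1 : ℝ)))ᵀ).det := (det_transpose _).symm
      _ = (Aᵀ.updateRow j (Pi.single j (1 : ℝ))).det := by rw [updateRow_transpose]
      _ = (A.updateRow j (Pi.single j (1 : ℝ))).det := by rw [hA]
      _ = A.adjugate j j := (adjugate_apply A j j).symm
  rw [h1, det_updateCol_add, det_updateCol_smul, updateCol_eq_self, h2]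

lemma adjugate_updateCol_one (c : n → ℝ) (j k : n) :
    adjugate ((1 : Matrix n n ℝ).updateCol j c) j k = if j = k then 1 else 0 := by
  rw [adjugate_apply]
  by_cases hk : k = j
  · subst hk
    have hF : ((1 : Matrix n n ℝ).updateCol k c).updateRow k (Pi.single k 1)
        = (1 : Matrix n n ℝ).updateCol k (fun a => if a = k then 1 else c a) := by
      ext a b
      by_cases ha : a = k
      · by_cases hb : b = k
        · simp [Matrix.updateRow_apply, Matrix.updateCol_apply, Pi.single_apply, ha, hb]
        · simp [Matrix.updateRow_apply, Matrix.updateCol_apply, Pi.single_apply, ha, hb,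
            Matrix.one_apply, Ne.symm hb]
      · by_cases hb : b = k
        · simp [Matrix.updateRow_apply, Matrix.updateCol_apply, ha, hb, Ne.symm ha]
        · simp [Matrix.updateRow_apply, Matrix.updateCol_apply, ha, hb]
    rw [hF, ← cramer_apply, cramer_one]
    simp
  · rw [Matrix.det_eq_zero_of_column_eq_zero k, if_neg (Ne.symm hk)]
    intro a
    by_cases ha : a = k
    · subst ha
      simp [Matrix.updateRow_apply, Pi.single_apply, hk]
    · simp [Matrix.updateRow_apply, Matrix.updateCol_apply, ha, Ne.symm hk,
        Matrix.one_apply, hk]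

lemma conj_transpose_symm {p : Type*} [Fintype p]
    (G : Matrix n n ℝ) (X : Matrix n p ℝ) (hG : Gᵀ = G) :
    (Xᵀ * G * X)ᵀ = Xᵀ * G * X := by
  rw [transpose_mul, transpose_mul, transpose_transpose, hG, Matrix.mul_assoc]

end Aux
/-- The submatrix of `M` consisting of the columns indexed by the finite set `S`. -/
def colsSub {m N : ℕ} (M : Matrix (Fin m) (Fin N) ℝ) (S : Finset (Fin N)) :
    Matrix (Fin m) {x // x ∈ S} ℝ :=
  M.submatrix id (fun x : {x // x ∈ S} => (x : Fin N))

/-- The pseudoinverse `M̂⁺ = (M̂ᵀ M̂)⁻¹ M̂ᵀ` of the full-column-rank submatrix `M̂ = M_{:,S}`. -/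
noncomputable def pinv {m N : ℕ} (M : Matrix (Fin m) (Fin N) ℝ) (S : Finset (Fin N)) :
    Matrix {x // x ∈ S} (Fin m) ℝ :=
  ((colsSub M S)ᵀ * colsSub M S)⁻¹ * (colsSub M S)ᵀ

/-- Replacing column `j ∈ S` of the full-column-rank submatrix `M̂ = M_{:,S}` by column
`i ∉ S` multiplies the squared volume `det(M̂ᵀ M̂)` by
`m_{j,i} = ((M̂⁺M)_{j,i})² + γ_i ω_j`, where `γ_i` is the squared norm of the component of
column `i` orthogonal to the column span of `M̂` and `ω_j = ((M̂ᵀM̂)⁻¹)_{j,j}`. -/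
theorem statement16 (m N r : ℕ) (hrm : r ≤ m)
    (M : Matrix (Fin m) (Fin N) ℝ) (S : Finset (Fin N)) (hS : S.card = r)
    (hinv : IsUnit ((colsSub M S)ᵀ * colsSub M S).det) :
    ∀ j, ∀ hj : j ∈ S, ∀ i ∉ S,
      ((colsSub M (insert i (S.erase j)))ᵀ * colsSub M (insert i (S.erase j))).det
        = (((pinv M S * M) ⟨j, hj⟩ i) ^ 2
            + (∑ k, (M k i - (colsSub M S * (pinv M S * M)) k i) ^ 2)
              * (((colsSub M S)ᵀ * colsSub M S)⁻¹ ⟨j, hj⟩ ⟨j, hj⟩))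
          * ((colsSub M S)ᵀ * colsSub M S).det := by
  intro j hj i hi
  classical
  set B : Matrix (Fin m) {x // x ∈ S} ℝ := colsSub M S with hB
  set G : Matrix {x // x ∈ S} {x // x ∈ S} ℝ := Bᵀ * B with hGdef
  have hGsymm : Gᵀ = G := by rw [hGdef, transpose_mul, transpose_transpose]
  set j' : {x // x ∈ S} := ⟨j, hj⟩ with hj'
  set v : Fin m → ℝ := fun k => M k i with hv
  set c : {x // x ∈ S} → ℝ := fun l => (pinv M S * M) l i with hc
  set w : Fin m → ℝ := fun k => v k - (B *ᵥ c) k with hw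
  set γ : ℝ := ∑ k, w k ^ 2 with hγ
  set E : Matrix {x // x ∈ S} {x // x ∈ S} ℝ := (1 : Matrix _ _ ℝ).updateCol j' c
    with hE
  set B' : Matrix (Fin m) {x // x ∈ S} ℝ := B.updateCol j' v with hB'
  set W : Matrix (Fin m) {x // x ∈ S} ℝ := vecMulVec w (Pi.single j' 1) with hW
  -- c as a matrix-vector product
  have hcv : c = G⁻¹ *ᵥ (Bᵀ *ᵥ v) := by
    funext l
    rw [mulVec_mulVec]
    rfl
  -- Bᵀ w = 0
  have hBw : Bᵀ *ᵥ w = 0 := by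
    have hw' : w = v - B *ᵥ c := rfl
    rw [hw', mulVec_sub, mulVec_mulVec, ← hGdef, hcv, mulVec_mulVec, mulVec_mulVec,
      mul_nonsing_inv G hinv, Matrix.one_mul, sub_self]
  have hBw' : ∀ a, ∑ k, B k a * w k = 0 := by
    intro a
    have h0 := congrFun hBw a
    simpa [mulVec, dotProduct, Matrix.transpose_apply] using h0
  -- decomposition of B'
  have h1 : B' = B * E + W := by
    ext k l
    by_cases hl : l = j'
    · have h5 : (B * E) k l = ∑ t, B k t * c t := by
        simp only [Matrix.mul_apply, hE]
        exact Finset.sum_congr rfl fun t _ => by rw [Matrix.updateCol_apply, if_pos hl]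
      have h6 : W k l = w k := by
        simp only [hW, vecMulVec_apply, Pi.single_apply, if_pos hl, mul_one]
      have h7 : B' k l = v k := by
        simp only [hB', Matrix.updateCol_apply, if_pos hl]
      have h9 : w k = v k - ∑ t, B k t * c t := rfl
      rw [Matrix.add_apply, h5, h6, h7, h9]
      ring
    · have h5 : (B * E) k l = B k l := by
        have ha : (B * E) k l = ∑ t, B k t * (1 : Matrix {x // x ∈ S} {x // x ∈ S} ℝ) t l := by
          simp only [Matrix.mul_apply, hE]
          exact Finset.sum_congr rfl fun t _ => by rw [Matrix.updateCol_apply, if_neg hl]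
        have hb2 : (∑ t, B k t * (1 : Matrix {x // x ∈ S} {x // x ∈ S} ℝ) t l)
            = (B * (1 : Matrix {x // x ∈ S} {x // x ∈ S} ℝ)) k l := rfl
        rw [ha, hb2, Matrix.mul_one]
      have h6 : W k l = 0 := by
        simp [hW, vecMulVec_apply, Pi.single_apply, hl]
      have h7 : B' k l = B k l := by
        simp only [hB', Matrix.updateCol_apply, if_neg hl]
      rw [Matrix.add_apply, h5, h6, h7, add_zero]
  -- Bᵀ * W = 0
  have h2 : Bᵀ * W = 0 := by
    ext a l
    simp only [hW, Matrix.mul_apply, vecMulVec_apply, Matrix.transpose_apply,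
      Matrix.zero_apply, ← mul_assoc, ← Finset.sum_mul]
    rw [hBw' a, zero_mul]
  -- Wᵀ * (B * E) = 0
  have h3 : Wᵀ * (B * E) = 0 := by
    have h3'' : (B * E)ᵀ * W = 0 := by
      rw [transpose_mul, Matrix.mul_assoc, h2, Matrix.mul_zero]
    have h3t := congrArg Matrix.transpose h3''
    rwa [transpose_mul, transpose_transpose, transpose_zero] at h3t
  -- Wᵀ * W
  have h4 : Wᵀ * W = Matrix.of (fun a b => if a = j' ∧ b = j' then γ else 0) := by
    ext a b
    simp only [hW, Matrix.mul_apply, vecMulVec_apply, Matrix.transpose_apply,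
      Matrix.of_apply, Pi.single_apply]
    by_cases ha : a = j'
    · by_cases hb : b = j'
      · simp only [ha, hb, eq_self_iff_true, if_true, and_self, mul_one, hγ]
        exact Finset.sum_congr rfl fun k _ => (sq (w k)).symm
      · simp [ha, hb]
    · simp [ha]
  -- Gram identity
  have hKey : B'ᵀ * B'
      = Eᵀ * G * E + Matrix.of (fun a b => if a = j' ∧ b = j' then γ else 0) := by
    have hx : Eᵀ * (Bᵀ * (B * E)) = Eᵀ * G * E := by
      rw [← Matrix.mul_assoc Bᵀ B E, ← hGdef, ← Matrix.mul_assoc]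
    rw [h1, transpose_add, Matrix.add_mul, Matrix.mul_add, Matrix.mul_add, h3, h4,
      transpose_mul B E, Matrix.mul_assoc Eᵀ Bᵀ W, h2, Matrix.mul_zero,
      Matrix.mul_assoc Eᵀ Bᵀ (B * E), add_zero, zero_add, hx]
  have hEGEsymm : (Eᵀ * G * E)ᵀ = Eᵀ * G * E := conj_transpose_symm G E hGsymm
  have hdet1 : (B'ᵀ * B').det = (Eᵀ * G * E).det + γ * (Eᵀ * G * E).adjugate j' j' := by
    rw [hKey, det_add_single_diag _ hEGEsymm]
  have hdetE : E.det = c j' := by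
    rw [hE, ← cramer_apply, cramer_one]; rfl
  have hdetEGE : (Eᵀ * G * E).det = c j' ^ 2 * G.det := by
    rw [det_mul, det_mul, det_transpose, hdetE]; ring
  have hadjE : ∀ k, adjugate E j' k = if j' = k then 1 else 0 := by
    intro k; rw [hE]; exact adjugate_updateCol_one c j' k
  have hadj : (Eᵀ * G * E).adjugate j' j' = G.adjugate j' j' := by
    rw [adjugate_mul_distrib, adjugate_mul_distrib, ← adjugate_transpose]
    simp only [Matrix.mul_apply, Matrix.transpose_apply, hadjE, ite_mul, one_mul, zero_mul,
      mul_ite, mul_one, mul_zero]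
    try simp
  have hadjG : γ * G.adjugate j' j' = γ * (G⁻¹ j' j' * G.det) := by
    have hd : G.det ≠ 0 := by
      intro h0; rw [h0] at hinv; exact hinv.ne_zero rfl
    have : G⁻¹ j' j' = (G.det)⁻¹ * G.adjugate j' j' := by
      rw [inv_def]
      simp [Ring.inverse_eq_inv']
    rw [this]
    field_simp
  -- Reindexing: the new Gram matrix equals a submatrix of B'ᵀ * B'
  have hji : j ≠ i := fun h => hi (h ▸ hj)
  set S' : Finset (Fin N) := insert i (S.erase j) with hS'
  have hmemS : ∀ y : {x // x ∈ S'}, (y : Fin N) ≠ i → (y : Fin N) ∈ S := by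
    intro y hy
    rcases Finset.mem_insert.mp y.2 with h' | h'
    · exact absurd h' hy
    · exact Finset.mem_of_mem_erase h'
  have hnej : ∀ y : {x // x ∈ S'}, (y : Fin N) ≠ i → (y : Fin N) ≠ j := by
    intro y hy
    rcases Finset.mem_insert.mp y.2 with h' | h'
    · exact absurd h' hy
    · exact (Finset.mem_erase.mp h').1
  let e : {x // x ∈ S'} ≃ {x // x ∈ S} :=
    { toFun := fun y => if h : (y : Fin N) = i then j' else ⟨y, hmemS y h⟩
      invFun := fun z => if h : (z : Fin N) = j then ⟨i, Finset.mem_insert_self _ _⟩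
        else ⟨z, Finset.mem_insert_of_mem (Finset.mem_erase.mpr ⟨h, z.2⟩)⟩
      left_inv := by
        intro y
        by_cases h : (y : Fin N) = i
        · have h2 : ((j' : {x // x ∈ S}) : Fin N) = j := rfl
          simp only [dif_pos h, dif_pos h2]
          exact Subtype.ext h.symm
        · simp only [dif_neg h, dif_neg (hnej y h)]
      right_inv := by
        intro z
        by_cases h : (z : Fin N) = j
        · have h2 : ((⟨i, Finset.mem_insert_self i (S.erase j)⟩ :
              {x // x ∈ insert i (S.erase j)}) : Fin N) = i := rfl
          simp only [dif_pos h, dif_pos h2]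
          exact Subtype.ext h.symm
        · have hzi : (z : Fin N) ≠ i := fun h' => hi (h' ▸ z.2)
          simp only [dif_neg h, dif_neg hzi] }
  have hcol : ∀ (y : {x // x ∈ S'}) (k : Fin m), colsSub M S' k y = B' k (e y) := by
    intro y k
    show M k (y : Fin N) = B' k (e y)
    by_cases h : (y : Fin N) = i
    · have he : e y = j' := dif_pos h
      rw [he, hB', Matrix.updateCol_apply, if_pos rfl, h]
    · have he : e y = ⟨y, hmemS y h⟩ := dif_neg h
      have hne : (⟨(y : Fin N), hmemS y h⟩ : {x // x ∈ S}) ≠ j' := by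
        intro h'
        exact (hnej y h) (congrArg Subtype.val h')
      rw [he, hB', Matrix.updateCol_apply, if_neg hne]
      rfl
  have hGram' : (colsSub M S')ᵀ * colsSub M S' = (B'ᵀ * B').submatrix e e := by
    ext y z
    simp only [Matrix.mul_apply, Matrix.submatrix_apply, Matrix.transpose_apply]
    exact Finset.sum_congr rfl fun k _ => by rw [hcol y k, hcol z k]
  -- match the stated quantities
  have hcj : (pinv M S * M) j' i = c j' := rfl
  have hγeq : (∑ k, (M k i - (B * (pinv M S * M)) k i) ^ 2) = γ := by
    rw [hγ]
    exact Finset.sum_congr rfl fun k _ => rfl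
  rw [hGram', det_submatrix_equiv_self, hdet1, hdetEGE, hadj, hadjG, hγeq, ← hcj]
  ring
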